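/- Let Δ be a positive integer, let G be a finite, simple, undirected, connected graph of maximum degree at most Δ with at least two vertices, and let M be a set of vertices of G. Then there is an edge uv of G such that Δ · |{m ∈ M : dist_G(u, m) > dist_G(v, m)}| ≥ |M| − 1 and Δ · |{m ∈ M : dist_G(u, m) < dist_G(v, m)}| ≥ |M| − 1; that is, both sets contain at least (|M| − 1)/Δ vertices. -/

import Mathlib

/-!
Take `u` a median of `M`, i.e. a vertex minimising `∑ m ∈ M, dist u m`. Across an edge `uv`
each distance changes by at most one, so `∑ dist u + #{closer to u} = ∑ dist v + #{closer to v}`;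
minimality of `u` then gives `#{closer to v} ≤ #{closer to u}` for every neighbour `v`. Every
`m ∈ M` other than `u` is closer to some neighbour of `u` (the next vertex on a geodesic), so the
at most `Δ` neighbours cover `M \ {u}`, and the neighbour covering the most has `Δ · #{closer to v}
≥ |M| - 1`.
-/

open SimpleGraph Finset

namespace SimpleGraph

variable {V : Type*} {G : SimpleGraph V}

theorem Reachable.exists_adj_dist_lt {u m : V} (h : G.Reachable u m) (hne : u ≠ m) :
    ∃ v, G.Adj u v ∧ G.dist v m < G.dist u m := by
  obtain ⟨p, hp⟩ := h.exists_walk_length_eq_dist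
  cases p with
  | nil => exact absurd rfl hne
  | cons hadj q =>
    refine ⟨_, hadj, ?_⟩
    have := dist_le q
    rw [Walk.length_cons] at hp
    omega

theorem Adj.dist_add_ite_eq {u v : V} (hadj : G.Adj u v) (m : V) :
    G.dist u m + (if G.dist u m < G.dist v m then 1 else 0) =
      G.dist v m + (if G.dist v m < G.dist u m then 1 else 0) := by
  rw [dist_comm (u := u), dist_comm (u := v)]
  rcases hadj.diff_dist_adj (u := m) with h | h | h <;> split_ifs <;> omega

theorem Adj.sum_dist_add_card_filter_lt {u v : V} (hadj : G.Adj u v) (M : Finset V) :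
    ∑ m ∈ M, G.dist u m + #{m ∈ M | G.dist u m < G.dist v m} =
      ∑ m ∈ M, G.dist v m + #{m ∈ M | G.dist v m < G.dist u m} := by
  simp only [card_filter, ← sum_add_distrib]
  exact sum_congr rfl fun m _ ↦ hadj.dist_add_ite_eq m

theorem Adj.card_filter_dist_lt_le_of_sum_dist_le {u v : V} (hadj : G.Adj u v) {M : Finset V}
    (hsum : ∑ m ∈ M, G.dist u m ≤ ∑ m ∈ M, G.dist v m) :
    #{m ∈ M | G.dist v m < G.dist u m} ≤ #{m ∈ M | G.dist u m < G.dist v m} := by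
  have := hadj.sum_dist_add_card_filter_lt M
  omega

theorem Connected.erase_subset_biUnion_filter_dist_lt [DecidableEq V] (hG : G.Connected) (u : V)
    [Fintype (G.neighborSet u)] (M : Finset V) :
    M.erase u ⊆ (G.neighborFinset u).biUnion fun v ↦ {m ∈ M | G.dist v m < G.dist u m} := by
  intro m hm
  obtain ⟨v, hadj, hlt⟩ := (hG u m).exists_adj_dist_lt (ne_of_mem_erase hm).symm
  exact mem_biUnion.mpr ⟨v, (mem_neighborFinset G u v).mpr hadj,
    mem_filter.mpr ⟨mem_of_mem_erase hm, hlt⟩⟩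

theorem Connected.exists_adj_card_sub_one_le_degree_mul [Nontrivial V] (hG : G.Connected) (u : V)
    [Fintype (G.neighborSet u)] (M : Finset V) :
    ∃ v, G.Adj u v ∧ #M - 1 ≤ G.degree u * #{m ∈ M | G.dist v m < G.dist u m} := by
  classical
  have hnonempty : (G.neighborFinset u).Nonempty := by
    rw [← card_pos, card_neighborFinset_eq_degree]
    exact hG.preconnected.degree_pos_of_nontrivial u
  obtain ⟨v, hv, hmax⟩ := exists_max_image (G.neighborFinset u)
    (fun v ↦ #{m ∈ M | G.dist v m < G.dist u m}) hnonempty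
  refine ⟨v, (mem_neighborFinset G u v).mp hv, ?_⟩
  calc #M - 1 ≤ #(M.erase u) := pred_card_le_card_erase
    _ ≤ #((G.neighborFinset u).biUnion fun v ↦ {m ∈ M | G.dist v m < G.dist u m}) :=
      card_le_card (hG.erase_subset_biUnion_filter_dist_lt u M)
    _ ≤ #(G.neighborFinset u) * #{m ∈ M | G.dist v m < G.dist u m} :=
      card_biUnion_le_card_mul _ _ _ hmax
    _ = G.degree u * #{m ∈ M | G.dist v m < G.dist u m} := by rw [card_neighborFinset_eq_degree]

end SimpleGraph

theorem balanced_edge_exists_general {V : Type*} [Fintype V]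
    (G : SimpleGraph V) [DecidableRel G.Adj] (hG : G.Connected)
    (hV : 2 ≤ Fintype.card V)
    (Δ : ℕ) (hdeg : ∀ v : V, G.degree v ≤ Δ)
    (M : Finset V) :
    ∃ u v : V, G.Adj u v ∧
      M.card - 1 ≤ Δ * (M.filter (fun m => G.dist v m < G.dist u m)).card ∧
      M.card - 1 ≤ Δ * (M.filter (fun m => G.dist u m < G.dist v m)).card := by
  have : Nontrivial V := Fintype.one_lt_card_iff_nontrivial.mp hV
  obtain ⟨u, -, hmedian⟩ := exists_min_image univ (fun x ↦ ∑ m ∈ M, G.dist x m) univ_nonempty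
  obtain ⟨v, hadj, hcover⟩ := hG.exists_adj_card_sub_one_le_degree_mul u M
  have hcloser := hadj.card_filter_dist_lt_le_of_sum_dist_le (hmedian v (mem_univ v))
  exact ⟨u, v, hadj, hcover.trans (Nat.mul_le_mul_right _ (hdeg u)),
    hcover.trans (Nat.mul_le_mul (hdeg u) hcloser)⟩

/-- In every finite connected graph `G` of maximum degree at most `Δ` with at
least two vertices, for every set `M` of vertices there is an edge `uv` such
that each of the two sets `{m ∈ M : dist(u, m) > dist(v, m)}` and
`{m ∈ M : dist(u, m) < dist(v, m)}` contains at least `(|M| − 1)/Δ` vertices. -/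
theorem balanced_edge_exists {V : Type*} [Fintype V] [DecidableEq V]
    (G : SimpleGraph V) [DecidableRel G.Adj] (hG : G.Connected)
    (hV : 2 ≤ Fintype.card V)
    (Δ : ℕ) (hΔ : 0 < Δ) (hdeg : ∀ v : V, G.degree v ≤ Δ)
    (M : Finset V) :
    ∃ u v : V, G.Adj u v ∧
      M.card - 1 ≤ Δ * (M.filter (fun m => G.dist v m < G.dist u m)).card ∧
      M.card - 1 ≤ Δ * (M.filter (fun m => G.dist u m < G.dist v m)).card :=
  balanced_edge_exists_general G hG hV Δ hdeg M
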